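/- arXiv:2109.09006 — 2 statements merged into one kernel-verified Lean document; each statement's English description precedes it below -/
import Mathlib

section
/- A monic polynomial f over F_q is self-reciprocal of degree 2d if and only if there exists a monic polynomial g of degree d such that f(x) = x^d · g(x + 1/x). -/
open Polynomial

section Aux
variable {F : Type*} [Field F]

private lemma monic2 : ((X:F[X])^2+1).Monic := by
  have := monic_X_pow_add (p := (1:F[X])) (n := 2) (by simpa using degree_one_le)
  simpa using this

private lemma nd2 : ((X:F[X])^2+1).natDegree = 2 := by compute_degree!

private lemma refl2 : ((X^2+1 : F[X])).reflect 2 = X^2+1 := by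
  rw [reflect_add, ← C_1, reflect_monomial, reflect_C]
  simp [revAt_le]
  ring

private lemma reflect_q (j : ℕ) : ((X^2+1 : F[X])^j).reflect (2*j) = (X^2+1)^j := by
  induction j with
  | zero => simp [reflect_C]
  | succ j ih =>
    have hdeg : ((X^2+1 : F[X])^j).natDegree ≤ 2*j :=
      le_trans natDegree_pow_le (by rw [nd2]; ring_nf; exact le_rfl)
    rw [pow_succ, show 2*(j+1) = 2*j+2 from by ring, reflect_mul _ _ hdeg nd2.le, ih, refl2]

private lemma ndq (j : ℕ) : ((X^2+1 : F[X])^j).natDegree = 2*j := by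
  rw [natDegree_pow, nd2]; ring

private lemma coeff_q_sym (j : ℕ) {k : ℕ} (hk : k ≤ 2*j) :
    ((X^2+1 : F[X])^j).coeff (2*j - k) = ((X^2+1 : F[X])^j).coeff k := by
  conv_rhs => rw [← reflect_q j]
  rw [coeff_reflect, revAt_le hk]

private lemma key (d : ℕ) : ∀ h : F[X], h.natDegree ≤ 2*d →
    (∀ k ≤ 2*d, h.coeff (2*d - k) = h.coeff k) →
    ∃ g : F[X], g.natDegree ≤ d ∧ g.coeff d = h.coeff (2*d) ∧
      h = ∑ j ∈ Finset.range (d+1), C (g.coeff j) * X^(d-j) * (X^2+1)^j := by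
  induction d with
  | zero =>
    intro h hdeg _
    refine ⟨h, hdeg, rfl, ?_⟩
    rw [Finset.sum_range_one, pow_zero, pow_zero, mul_one, mul_one]
    exact eq_C_of_natDegree_le_zero hdeg
  | succ d ih =>
    intro h hdeg hsym
    set c := h.coeff (2*(d+1)) with hc
    set p : F[X] := (X^2+1)^(d+1) with hp
    have hpmon : p.Monic := monic2.pow _
    have hpdeg : p.natDegree = 2*(d+1) := ndq (d+1)
    set h' := h - C c * p with hh'
    have h'coeff : ∀ k, h'.coeff k = h.coeff k - c * p.coeff k := by
      intro k; rw [hh', coeff_sub, coeff_C_mul]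
    have h'deg : h'.natDegree ≤ 2*(d+1) := by
      refine natDegree_sub_le_iff_left ?_ |>.mpr hdeg
      exact le_trans (natDegree_mul_le) (by simp [hpdeg])
    have h'sym : ∀ k ≤ 2*(d+1), h'.coeff (2*(d+1) - k) = h'.coeff k := by
      intro k hk
      rw [h'coeff, h'coeff, hsym k hk, coeff_q_sym (d+1) hk]
    have h'top : h'.coeff (2*(d+1)) = 0 := by
      have hp1 : p.coeff (2*(d+1)) = 1 := by rw [← hpdeg]; exact hpmon.coeff_natDegree
      rw [h'coeff, hp1, mul_one, hc, sub_self]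
    have h'bot : h'.coeff 0 = 0 := by
      have := h'sym (2*(d+1)) le_rfl
      rwa [Nat.sub_self, h'top] at this
    set h'' := h'.divX with hh''
    have hXh : h'' * X = h' := by
      have := h'.divX_mul_X_add
      rwa [h'bot, map_zero, add_zero] at this
    have h''coeff : ∀ k, h''.coeff k = h'.coeff (k+1) := fun k => coeff_divX ..
    have h''deg : h''.natDegree ≤ 2*d := by
      rw [natDegree_le_iff_coeff_eq_zero]
      intro m hm
      rw [h''coeff]
      rcases eq_or_lt_of_le (show 2*(d+1) ≤ m+1 by omega) with h1 | h1
      · rw [← h1]; exact h'top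
      · exact coeff_eq_zero_of_natDegree_lt (lt_of_le_of_lt h'deg h1)
    have h''sym : ∀ k ≤ 2*d, h''.coeff (2*d - k) = h''.coeff k := by
      intro k hk
      rw [h''coeff, h''coeff, show 2*d - k + 1 = 2*(d+1) - (k+1) by omega]
      exact h'sym (k+1) (by omega)
    obtain ⟨g'', hg''deg, hg''top, hg''eq⟩ := ih h'' h''deg h''sym
    refine ⟨g'' + C c * X^(d+1), ?_, ?_, ?_⟩
    · exact le_trans (natDegree_add_le _ _)
        (max_le (le_trans hg''deg (by omega)) (le_trans natDegree_mul_le (by simp)))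
    · rw [coeff_add, coeff_C_mul, coeff_X_pow, if_pos rfl, mul_one,
        coeff_eq_zero_of_natDegree_lt (lt_of_le_of_lt hg''deg (by omega)), zero_add]
    · have hcj : ∀ j ∈ Finset.range (d+1), (g'' + C c * X^(d+1)).coeff j = g''.coeff j := by
        intro j hj
        rw [coeff_add, coeff_C_mul, coeff_X_pow,
          if_neg (by have := Finset.mem_range.mp hj; omega), mul_zero, add_zero]
      have hcd : (g'' + C c * X^(d+1)).coeff (d+1) = c := by
        rw [coeff_add, coeff_C_mul, coeff_X_pow, if_pos rfl, mul_one,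
          coeff_eq_zero_of_natDegree_lt (lt_of_le_of_lt hg''deg (by omega)), zero_add]
      rw [Finset.sum_range_succ, hcd, Nat.sub_self, pow_zero, mul_one]
      have : ∑ j ∈ Finset.range (d+1), C ((g'' + C c * X^(d+1)).coeff j) * X^(d+1-j) * (X^2+1)^j
          = ∑ j ∈ Finset.range (d+1), (C (g''.coeff j) * X^(d-j) * (X^2+1)^j) * X := by
        refine Finset.sum_congr rfl fun j hj => ?_
        have hj' := Finset.mem_range.mp hj
        rw [hcj j hj, show d+1-j = (d-j)+1 by omega, pow_succ]
        ring
      rw [this, ← Finset.sum_mul, ← hg''eq, hXh, hh']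
      ring

private lemma reflect_sum {ι : Type} (s : Finset ι) (f : ι → F[X]) (N : ℕ) :
    (∑ i ∈ s, f i).reflect N = ∑ i ∈ s, (f i).reflect N := by
  classical
  induction s using Finset.induction with
  | empty => simp
  | insert _ _ hni ih => rw [Finset.sum_insert hni, Finset.sum_insert hni, reflect_add, ih]

private lemma reflect_term (d j : ℕ) (hj : j ≤ d) (a : F) :
    (C a * X^(d-j) * (X^2+1)^j).reflect (2*d) = C a * X^(d-j) * (X^2+1)^j := by
  have hX : ((X : F[X])^(d-j)).natDegree ≤ 2*(d-j) := by
    rw [natDegree_X_pow]; omega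
  have hq : ((X^2+1 : F[X])^j).natDegree ≤ 2*j := (ndq j).le
  rw [mul_assoc, show 2*d = 2*(d-j) + 2*j by omega, reflect_C_mul,
    reflect_mul _ _ hX hq, reflect_q, reflect_monomial,
    revAt_le (show d-j ≤ 2*(d-j) by omega), show 2*(d-j)-(d-j) = d-j by omega]

end Aux

/-- A monic polynomial `f` over a finite field is self-reciprocal of degree `2d` iff
`f(x) = x^d g(x + 1/x)` for some monic polynomial `g` of degree `d`; here
`x^d g(x+1/x) = ∑_j g_j x^{d-j} (x^2+1)^j`. -/
theorem selfReciprocal_iff_exists_g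
    {F : Type*} [Field F] [Fintype F] (d : ℕ) (hd : 1 ≤ d) (f : F[X]) (hmonic : f.Monic) :
    (f.reverse = f ∧ f.natDegree = 2 * d) ↔
      ∃ g : F[X], g.Monic ∧ g.natDegree = d ∧
        f = ∑ j ∈ Finset.range (d + 1), C (g.coeff j) * X ^ (d - j) * (X ^ 2 + 1) ^ j := by
  constructor
  · rintro ⟨hrev, hdeg⟩
    have hsym : ∀ k ≤ 2*d, f.coeff (2*d - k) = f.coeff k := by
      intro k hk
      calc f.coeff (2*d - k) = f.coeff (revAt f.natDegree k) := by rw [hdeg, revAt_le hk]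
        _ = f.reverse.coeff k := (coeff_reverse f k).symm
        _ = f.coeff k := by rw [hrev]
    obtain ⟨g, hgle, hgd, hgeq⟩ := key d f hdeg.le hsym
    have hgd1 : g.coeff d = 1 := by
      rw [hgd, ← hdeg]; exact hmonic.coeff_natDegree
    have hgdeg : g.natDegree = d :=
      le_antisymm hgle (le_natDegree_of_ne_zero (by rw [hgd1]; exact one_ne_zero))
    refine ⟨g, ?_, hgdeg, hgeq⟩
    rw [Monic.def, leadingCoeff, hgdeg, hgd1]
  · rintro ⟨g, hgmon, hgdeg, hfeq⟩
    have htd : ∀ j ∈ Finset.range (d+1),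
        (C (g.coeff j) * X^(d-j) * ((X:F[X])^2+1)^j).natDegree ≤ d + j := by
      intro j hj
      have hjd : j ≤ d := Nat.lt_succ_iff.mp (Finset.mem_range.mp hj)
      have h1 : (C (g.coeff j) * X^(d-j) : F[X]).natDegree ≤ d - j :=
        le_trans natDegree_mul_le (by rw [natDegree_C, natDegree_X_pow]; omega)
      refine le_trans natDegree_mul_le ?_
      rw [ndq j]
      omega
    have hfle : f.natDegree ≤ 2*d := by
      rw [hfeq]
      refine natDegree_sum_le_of_forall_le _ _ fun j hj => ?_
      have := Finset.mem_range.mp hj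
      exact le_trans (htd j hj) (by omega)
    have hcf : f.coeff (2*d) = 1 := by
      have hg1 : g.coeff d = 1 := by rw [← hgdeg]; exact hgmon.coeff_natDegree
      rw [hfeq, finset_sum_coeff, Finset.sum_eq_single d]
      · rw [hg1, map_one, Nat.sub_self, pow_zero, one_mul, one_mul, ← ndq (F := F) d]
        exact (monic2.pow d).coeff_natDegree
      · intro j hj hne
        have hjd := Finset.mem_range.mp hj
        refine coeff_eq_zero_of_natDegree_lt (lt_of_le_of_lt (htd j hj) ?_)
        omega
      · intro hmem; exact absurd (Finset.self_mem_range_succ d) hmem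
    have hfdeg : f.natDegree = 2*d :=
      le_antisymm hfle (le_natDegree_of_ne_zero (by rw [hcf]; exact one_ne_zero))
    refine ⟨?_, hfdeg⟩
    show f.reflect f.natDegree = f
    rw [hfdeg]
    conv_lhs => rw [hfeq]
    rw [reflect_sum]
    rw [Finset.sum_congr rfl fun j hj =>
      reflect_term d j (Nat.lt_succ_iff.mp (Finset.mem_range.mp hj)) (g.coeff j)]
    exact hfeq.symm
end

section
/- If n ≥ 2 is a power of 2, then the number of self-reciprocal irreducible monic polynomials of degree 2n over F_q equals (1/(2n))(q^n + [2 | q] − 1), where [2 | q] is 1 if q is even and 0 otherwise. -/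
/-!
Let `q = #F` and work in an algebraic closure. Over a finite field the roots of an irreducible
polynomial of degree `d` form a single Frobenius orbit `x, x ^ q, …, x ^ q ^ (d - 1)`, and
`d ∣ N ↔ x ^ q ^ N = x`. If `f` is self-reciprocal of degree `2n` with root `x`, then `x⁻¹`
is a root too, so `x⁻¹ = x ^ q ^ j`; then `x ^ q ^ (2j) = x` forces `j = n`, that is
`x ^ (q ^ n + 1) = 1`.
Conversely, if `x ^ (q ^ n + 1) = 1` and `x ^ 2 ≠ 1`, the degree of `x` divides `2n` but not `n`,
which for `n` a power of two means it is `2n`. So the polynomials counted are the minimal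
polynomials of the `q ^ n + 1 - #{1, -1}` roots of unity of order dividing `q ^ n + 1` other than
`±1`, each accounting for `2n` of them.
-/

open Polynomial Finset

namespace Polynomial

theorem eval_one_reverse {R : Type*} [CommSemiring R] (f : R[X]) :
    f.reverse.eval 1 = f.eval 1 := by
  let : Invertible (1 : R) := invertibleOne
  simpa using eval₂_reverse_mul_pow (RingHom.id R) 1 f

theorem reverse_eq_self_of_dvd {R : Type*} [CommRing R] [IsDomain R] {f : R[X]} (hf : f.Monic)
    (hdvd : f ∣ f.reverse) (h1 : f.eval 1 ≠ 0) : f.reverse = f := by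
  obtain ⟨g, hg⟩ := hdvd
  have hg0 : g ≠ 0 := by
    rintro rfl
    rw [mul_zero, reverse_eq_zero] at hg
    exact hf.ne_zero hg
  have hdeg : g.natDegree = 0 := by
    have := reverse_natDegree_le f
    rw [hg, hf.natDegree_mul' hg0] at this
    omega
  rw [eq_C_of_natDegree_eq_zero hdeg] at hg
  have hc : g.coeff 0 = 1 := by
    have := congrArg (eval 1) hg
    rw [eval_one_reverse, eval_mul, eval_C] at this
    exact mul_left_cancel₀ h1 (this.symm.trans (mul_one _).symm)
  rw [hg, hc, C_1, mul_one]

end Polynomial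

namespace minpoly

variable {F K : Type*} [Field F] [Field K] [Algebra F K] {x : K}

theorem sq_ne_one_of_natDegree_ne_one (h : (minpoly F x).natDegree ≠ 1) : x ^ 2 ≠ 1 := by
  rw [Ne, sq_eq_one_iff]
  rintro (rfl | rfl) <;> apply h <;> rw [natDegree_eq_one_iff]
  · exact ⟨1, map_one _⟩
  · exact ⟨-1, by simp⟩

theorem reverse_eq_self_iff (hx : IsIntegral F x) (hdeg : (minpoly F x).natDegree ≠ 1) :
    (minpoly F x).reverse = minpoly F x ↔ Polynomial.aeval x⁻¹ (minpoly F x) = 0 := by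
  have hx0 : x ≠ 0 := by
    rintro rfl
    exact hdeg (by rw [minpoly.zero, natDegree_X])
  let := invertibleOfNonzero hx0
  let := invertibleOfNonzero (inv_ne_zero hx0)
  constructor
  · intro h
    rw [← h, aeval_def, ← invOf_eq_inv, eval₂_reverse_eq_zero_iff, ← aeval_def,
      minpoly.aeval]
  · intro h
    refine reverse_eq_self_of_dvd (minpoly.monic hx) (minpoly.dvd F x ?_) fun h1 ↦ hdeg ?_
    · have := (eval₂_reverse_eq_zero_iff (algebraMap F K) x⁻¹ _).mpr h
      rwa [invOf_eq_inv, inv_inv] at this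
    · exact natDegree_eq_of_degree_eq_some
        (degree_eq_one_of_irreducible_of_root (minpoly.irreducible hx) h1)

end minpoly

section AlgClosed

variable {F K : Type*} [Field F] [Field K] [IsAlgClosed K] [Algebra F K]

theorem setOf_monic_irreducible_eq_image_minpoly [Algebra.IsIntegral F K] (P : F[X] → Prop) :
    {f : F[X] | f.Monic ∧ Irreducible f ∧ P f} = minpoly F '' {x : K | P (minpoly F x)} := by
  ext f
  constructor
  · rintro ⟨hmonic, hirr, hP⟩
    obtain ⟨x, hx⟩ := IsAlgClosed.exists_aeval_eq_zero K f (degree_pos_of_irreducible hirr).ne'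
    obtain rfl := minpoly.eq_of_irreducible_of_monic hirr hx hmonic
    exact ⟨x, hP, rfl⟩
  · rintro ⟨x, hP, rfl⟩
    have hx := Algebra.IsIntegral.isIntegral (R := F) x
    exact ⟨minpoly.monic hx, minpoly.irreducible hx, hP⟩

theorem card_eq_mul_card_image_minpoly [PerfectField F] [Algebra.IsIntegral F K] [DecidableEq F[X]]
    {s : Finset K} {d : ℕ} (hs : ∀ x ∈ s, ∀ y, minpoly F y = minpoly F x → y ∈ s)
    (hd : ∀ x ∈ s, (minpoly F x).natDegree = d) : #s = #(s.image (minpoly F)) * d := by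
  rw [card_eq_sum_card_image (minpoly F) s]
  refine sum_const_nat fun f hf ↦ ?_
  obtain ⟨x, hxs, rfl⟩ := mem_image.mp hf
  have hx := Algebra.IsIntegral.isIntegral (R := F) x
  have hfiber : {y ∈ s | minpoly F y = minpoly F x} = ((minpoly F x).rootSet K).toFinset := by
    ext y
    rw [mem_filter, Set.mem_toFinset, ← isConjRoot_iff_mem_minpoly_rootSet hx, IsConjRoot,
      eq_comm]
    exact ⟨And.right, fun h ↦ ⟨hs x hxs y h.symm, h⟩⟩
  rw [hfiber, Set.toFinset_card, ← hd x hxs]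
  exact card_rootSet_eq_natDegree (PerfectField.separable_of_irreducible (minpoly.irreducible hx))
    (IsAlgClosed.splits _)

end AlgClosed

namespace FiniteField

variable {F K : Type*} [Field F] [Fintype F] [Field K] [Algebra F K] {x : K}

local notation "q" => Fintype.card F

theorem frobeniusAlgHom_pow_apply (i : ℕ) (x : K) :
    (frobeniusAlgHom F K ^ i) x = x ^ q ^ i := by
  rw [AlgHom.coe_pow, coe_frobeniusAlgHom, pow_iterate]

theorem aeval_pow_card_pow_eq_zero {f : F[X]} (h : aeval x f = 0) (i : ℕ) :
    aeval (x ^ q ^ i) f = 0 := by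
  rw [← frobeniusAlgHom_pow_apply, aeval_algHom_apply, h, map_zero]

theorem natDegree_minpoly_dvd_iff (hx : IsIntegral F x) {N : ℕ} :
    (minpoly F x).natDegree ∣ N ↔ x ^ q ^ N = x := by
  rw [(minpoly.irreducible hx).natDegree_dvd_iff_dvd_X_pow_card_pow_sub_X, minpoly.dvd_iff,
    Nat.card_eq_fintype_card, map_sub, map_pow, aeval_X, sub_eq_zero]

theorem injOn_pow_card_pow (hx : IsIntegral F x) :
    Set.InjOn (fun i ↦ x ^ q ^ i) (Set.Iio (minpoly F x).natDegree) := by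
  intro i hi j hj hij
  wlog hle : i ≤ j generalizing i j
  · exact (this hj hi hij.symm (by omega)).symm
  have hfix : x ^ q ^ (j - i) = x := by
    apply (frobeniusAlgHom F K ^ i).injective
    simp only [AlgHom.toRingHom_eq_coe, RingHom.coe_coe, frobeniusAlgHom_pow_apply, ← pow_mul,
      ← pow_add, Nat.sub_add_cancel hle]
    exact hij.symm
  have := Nat.eq_zero_of_dvd_of_lt ((natDegree_minpoly_dvd_iff hx).mpr hfix)
    (by have := Set.mem_Iio.mp hj; omega)
  omega

theorem exists_eq_pow_card_pow_of_aeval_eq_zero (hx : IsIntegral F x) {y : K}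
    (hy : aeval y (minpoly F x) = 0) : ∃ i < (minpoly F x).natDegree, y = x ^ q ^ i := by
  classical
  have hf0 := minpoly.ne_zero hx
  have horbit : (range (minpoly F x).natDegree).image (fun i ↦ x ^ q ^ i) =
      ((minpoly F x).aroots K).toFinset := by
    refine eq_of_subset_of_card_le (fun y hy ↦ ?_) ?_
    · obtain ⟨i, -, rfl⟩ := mem_image.mp hy
      exact Multiset.mem_toFinset.mpr
        (mem_aroots.mpr ⟨hf0, aeval_pow_card_pow_eq_zero (minpoly.aeval F x) i⟩)
    · rw [card_image_of_injOn (by simpa using injOn_pow_card_pow hx), card_range]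
      calc _ ≤ Multiset.card ((minpoly F x).aroots K) := Multiset.toFinset_card_le _
        _ ≤ _ := (card_roots' _).trans natDegree_map_le
  have hy' : y ∈ ((minpoly F x).aroots K).toFinset :=
    Multiset.mem_toFinset.mpr (mem_aroots.mpr ⟨hf0, hy⟩)
  simpa [← horbit, eq_comm] using hy'

theorem natDegree_minpoly_eq_of_pow_card_pow_add_one_eq_one (hx : IsIntegral F x) {k : ℕ}
    (h : x ^ (q ^ 2 ^ k + 1) = 1) (hx2 : x ^ 2 ≠ 1) :
    (minpoly F x).natDegree = 2 * 2 ^ k := by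
  have hinv : x ^ q ^ 2 ^ k = x⁻¹ := eq_inv_of_mul_eq_one_left (by rwa [← pow_succ])
  have hfix : x ^ q ^ 2 ^ (k + 1) = x := by
    rw [pow_succ, pow_mul, sq, pow_mul, hinv, inv_pow, hinv, inv_inv]
  obtain ⟨j, hj, hd⟩ := (Nat.dvd_prime_pow Nat.prime_two).mp
    ((natDegree_minpoly_dvd_iff hx).mpr hfix)
  rcases hj.lt_or_eq with hj | rfl
  · -- otherwise `x` would already be fixed by `q ^ 2 ^ k`, i.e. `x = x⁻¹`
    have hfix' : x ^ q ^ 2 ^ k = x :=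
      (natDegree_minpoly_dvd_iff hx).mp (hd ▸ pow_dvd_pow 2 (by omega))
    refine absurd ?_ hx2
    rw [sq]
    nth_rewrite 1 [← hfix']
    rw [← pow_succ, h]
  · rw [hd, pow_succ']

theorem pow_card_pow_add_one_eq_one_of_aeval_inv_eq_zero (hx : IsIntegral F x) {n : ℕ}
    (hdeg : (minpoly F x).natDegree = 2 * n) (hinv : aeval x⁻¹ (minpoly F x) = 0)
    (hx2 : x ^ 2 ≠ 1) : x ^ (q ^ n + 1) = 1 := by
  have hx0 : x ≠ 0 := by
    rintro rfl
    rw [minpoly.zero, natDegree_X] at hdeg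
    omega
  obtain ⟨j, hj, hxj⟩ := exists_eq_pow_card_pow_of_aeval_eq_zero hx hinv
  have hfix : x ^ q ^ (2 * j) = x := by
    rw [two_mul, pow_add, pow_mul, ← hxj, inv_pow, ← hxj, inv_inv]
  obtain ⟨c, rfl⟩ : n ∣ j :=
    Nat.dvd_of_mul_dvd_mul_left two_pos (hdeg ▸ (natDegree_minpoly_dvd_iff hx).mpr hfix)
  have hc : c < 2 := by
    rw [hdeg] at hj
    exact Nat.lt_of_mul_lt_mul_left (a := n) (by linarith)
  interval_cases c
  · refine absurd ?_ hx2
    rw [mul_zero, pow_zero, pow_one] at hxj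
    rw [sq]
    nth_rewrite 1 [← hxj]
    exact inv_mul_cancel₀ hx0
  · rw [mul_one] at hxj
    rw [pow_succ, ← hxj, inv_mul_cancel₀ hx0]

theorem reverse_minpoly_eq_self_and_natDegree_eq_iff (hx : IsIntegral F x) (k : ℕ) :
    (minpoly F x).reverse = minpoly F x ∧ (minpoly F x).natDegree = 2 * 2 ^ k ↔
      x ^ (q ^ 2 ^ k + 1) = 1 ∧ x ^ 2 ≠ 1 := by
  have h2k : 2 * 2 ^ k ≠ 1 := by omega
  constructor
  · rintro ⟨hrev, hdeg⟩
    have hx2 := minpoly.sq_ne_one_of_natDegree_ne_one (hdeg ▸ h2k)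
    have hinv := (minpoly.reverse_eq_self_iff hx (hdeg ▸ h2k)).mp hrev
    exact ⟨pow_card_pow_add_one_eq_one_of_aeval_inv_eq_zero hx hdeg hinv hx2, hx2⟩
  · rintro ⟨h, hx2⟩
    have hdeg := natDegree_minpoly_eq_of_pow_card_pow_add_one_eq_one hx h hx2
    refine ⟨(minpoly.reverse_eq_self_iff hx (hdeg ▸ h2k)).mpr ?_, hdeg⟩
    rw [← eq_inv_of_mul_eq_one_left (by rwa [← pow_succ] : x ^ q ^ 2 ^ k * x = 1)]
    exact aeval_pow_card_pow_eq_zero (minpoly.aeval F x) _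

variable (F)

theorem card_nthRootsFinset_card_pow_add_one [IsAlgClosed K] {n : ℕ} (hn : n ≠ 0) :
    #(nthRootsFinset (q ^ n + 1) (1 : K)) = q ^ n + 1 := by
  have hq : (q : K) = 0 := by
    rw [← map_natCast (algebraMap F K), cast_card_eq_zero, map_zero]
  have : NeZero ((q ^ n + 1 : ℕ) : K) := ⟨by simp [hq, hn]⟩
  obtain ⟨ζ, hζ⟩ := HasEnoughRootsOfUnity.exists_primitiveRoot K (q ^ n + 1)
  exact hζ.card_nthRootsFinset

theorem filter_nthRootsFinset_card_pow_add_one_sq_eq_one [DecidableEq K] (n : ℕ) :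
    {x ∈ nthRootsFinset (q ^ n + 1) (1 : K) | x ^ 2 = 1} = {1, -1} := by
  have hneg : (-1 : K) ^ q ^ n = -1 := by
    simpa using congrArg (algebraMap F K) (pow_card_pow n (-1 : F))
  ext x
  rw [mem_filter, mem_nthRootsFinset (by positivity), sq_eq_one_iff, mem_insert, mem_singleton]
  refine ⟨And.right, fun h ↦ ⟨?_, h⟩⟩
  rcases h with rfl | rfl
  · exact one_pow _
  · rw [pow_succ, hneg, neg_one_mul, neg_neg]

theorem card_pair_one_neg_one [DecidableEq K] :
    #({1, -1} : Finset K) = if Even q then 1 else 2 := by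
  have hchar : ringChar K = 2 ↔ Even q := by
    rw [← Algebra.ringChar_eq F K, even_card_iff_char_two, Nat.even_iff]
  split_ifs with hq
  · rw [neg_one_eq_one_iff.mpr (hchar.mpr hq), insert_eq_of_mem (mem_singleton_self _),
      card_singleton]
  · exact card_pair fun h ↦ hq (hchar.mp (neg_one_eq_one_iff.mp h.symm))

theorem card_filter_nthRootsFinset_card_pow_add_one_sq_ne_one [IsAlgClosed K] [DecidableEq K]
    {n : ℕ} (hn : n ≠ 0) :
    (#{x ∈ nthRootsFinset (q ^ n + 1) (1 : K) | x ^ 2 ≠ 1} : ℚ) =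
      q ^ n + (if Even q then 1 else 0) - 1 := by
  have := card_filter_add_card_filter_not (s := nthRootsFinset (q ^ n + 1) (1 : K)) (· ^ 2 = 1)
  rw [filter_nthRootsFinset_card_pow_add_one_sq_eq_one F, card_pair_one_neg_one F,
    card_nthRootsFinset_card_pow_add_one F hn] at this
  rw [← Nat.cast_inj (R := ℚ), Nat.cast_add] at this
  rw [eq_sub_of_add_eq' this]
  split_ifs <;> push_cast <;> ring

end FiniteField

theorem S_pow_two_general
    {F : Type*} [Field F] [Fintype F] (n : ℕ) (hpow : ∃ k, n = 2 ^ k) :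
    ({f : F[X] | f.Monic ∧ Irreducible f ∧ f.reverse = f ∧ f.natDegree = 2 * n}.ncard : ℚ) =
      (1 / (2 * (n : ℚ))) *
        ((Fintype.card F : ℚ) ^ n + (if Even (Fintype.card F) then 1 else 0) - 1) := by
  classical
  obtain ⟨k, rfl⟩ := hpow
  set A : Finset (AlgebraicClosure F) :=
    {x ∈ nthRootsFinset (Fintype.card F ^ 2 ^ k + 1) 1 | x ^ 2 ≠ 1}
  have hA : ∀ x, x ∈ A ↔
      (minpoly F x).reverse = minpoly F x ∧ (minpoly F x).natDegree = 2 * 2 ^ k := fun x ↦ by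
    rw [mem_filter, mem_nthRootsFinset (by positivity),
      FiniteField.reverse_minpoly_eq_self_and_natDegree_eq_iff (Algebra.IsIntegral.isIntegral x)]
  have himage :
      {f : F[X] | f.Monic ∧ Irreducible f ∧ f.reverse = f ∧ f.natDegree = 2 * 2 ^ k} =
        ↑(A.image (minpoly F)) := by
    rw [setOf_monic_irreducible_eq_image_minpoly (K := AlgebraicClosure F), coe_image]
    exact congrArg _ (Set.ext fun x ↦ (hA x).symm)
  have hcard := card_eq_mul_card_image_minpoly (s := A)
    (fun x hx y hy ↦ (hA y).mpr (hy ▸ (hA x).mp hx)) (fun x hx ↦ ((hA x).mp hx).2)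
  rw [himage, Set.ncard_coe_finset,
    ← FiniteField.card_filter_nthRootsFinset_card_pow_add_one_sq_ne_one F
      (K := AlgebraicClosure F) (by positivity), hcard]
  push_cast
  field_simp

/-- If `n ≥ 2` is a power of 2, then the number of self-reciprocal irreducible monic
polynomials of degree `2n` over `F_q` is `(1/(2n)) (q^n + [2 ∣ q] - 1)`. -/
theorem S_pow_two
    {F : Type*} [Field F] [Fintype F] (n : ℕ) (hn : 2 ≤ n) (hpow : ∃ k, n = 2 ^ k) :
    ({f : F[X] | f.Monic ∧ Irreducible f ∧ f.reverse = f ∧ f.natDegree = 2 * n}.ncard : ℚ) =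
      (1 / (2 * (n : ℚ))) *
        ((Fintype.card F : ℚ) ^ n + (if Even (Fintype.card F) then 1 else 0) - 1) :=
  S_pow_two_general n hpow
end
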